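/- arXiv:1503.01989 — 6 statements merged into one kernel-verified Lean document; each statement's English description precedes it below -/
import Mathlib

section
/- Let g ∈ GL₂(ℤ) have all entries non-negative. Then there exists a unique finite sequence M₁, …, M_k of matrices, each equal to L or to R, and a unique E ∈ {I, F}, such that g = M₁·M₂·⋯·M_k·E and such that every partial product M_r·M_{r+1}·⋯·M_k·E (for 1 ≤ r ≤ k+1) has all entries non-negative. (Equivalently: there is a unique sequence of row subtractions keeping all entries non-negative which reduces g to the identity I or to F.) -/
/-- The matrix `F = [[0,1],[1,0]]` as an element of `GL₂(ℤ)`. -/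
def Fmat : GL (Fin 2) ℤ := ⟨!![0,1;1,0], !![0,1;1,0], by decide, by decide⟩

/-- The matrix `L = [[1,0],[1,1]]` as an element of `GL₂(ℤ)`. -/
def Lmat : GL (Fin 2) ℤ := ⟨!![1,0;1,1], !![1,0;-1,1], by decide, by decide⟩

/-- The matrix `R = [[1,1],[0,1]]` as an element of `GL₂(ℤ)`. -/
def Rmat : GL (Fin 2) ℤ := ⟨!![1,1;0,1], !![1,-1;0,1], by decide, by decide⟩

/-!
Left multiplication by `L⁻¹` subtracts the first row from the second, and by `R⁻¹` the second
from the first; for a non-negative `g` the result stays non-negative exactly when the subtracted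
row is dominated entrywise by the other. Both rows cannot dominate each other, since `det g = ±1`,
so the first letter of any admissible factorization is forced, and uniqueness follows by induction
on the word. If neither row dominates the other, the inequalities `a > c`, `d > b` (or the crossed
ones) together with `ad - bc = ±1` leave only `g = I` (or `g = F`). Otherwise one reduction step
strictly lowers the sum of the entries, which gives existence by well-founded recursion.
-/

local notation "Mat" => Matrix (Fin 2) (Fin 2) ℤ

def EntrywiseNonneg (g : GL (Fin 2) ℤ) : Prop :=
  ∀ i j, 0 ≤ (g : Mat) i j

def IsLRFactorization (g : GL (Fin 2) ℤ) (p : List (GL (Fin 2) ℤ) × GL (Fin 2) ℤ) : Prop :=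
  (∀ m ∈ p.1, m = Lmat ∨ m = Rmat) ∧
  (p.2 = 1 ∨ p.2 = Fmat) ∧
  g = p.1.prod * p.2 ∧
  ∀ r, EntrywiseNonneg ((p.1.drop r).prod * p.2)

def entrySum (g : GL (Fin 2) ℤ) : ℤ :=
  (g : Mat) 0 0 + (g : Mat) 0 1 + (g : Mat) 1 0 + (g : Mat) 1 1

lemma entrySum_nonneg {g : GL (Fin 2) ℤ} (hg : EntrywiseNonneg g) : 0 ≤ entrySum g := by
  have := hg 0 0; have := hg 0 1; have := hg 1 0; have := hg 1 1
  unfold entrySum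
  omega

section Entries

variable (g : GL (Fin 2) ℤ)

lemma GL_two_det_eq_one_or_neg_one :
    (g : Mat) 0 0 * (g : Mat) 1 1 - (g : Mat) 0 1 * (g : Mat) 1 0 = 1 ∨
    (g : Mat) 0 0 * (g : Mat) 1 1 - (g : Mat) 0 1 * (g : Mat) 1 0 = -1 := by
  rw [← Matrix.det_fin_two, ← Int.isUnit_iff, ← Matrix.isUnit_iff_isUnit_det]
  exact g.isUnit

lemma GL_two_row_ne_zero (i : Fin 2) : (g : Mat) i 0 ≠ 0 ∨ (g : Mat) i 1 ≠ 0 := by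
  by_contra! h
  have hdet := GL_two_det_eq_one_or_neg_one g
  fin_cases i <;> simp_all

lemma GL_two_rows_ne : (g : Mat) 0 0 ≠ (g : Mat) 1 0 ∨ (g : Mat) 0 1 ≠ (g : Mat) 1 1 := by
  by_contra! h
  have hdet := GL_two_det_eq_one_or_neg_one g
  rw [h.1, h.2, mul_comm, sub_self] at hdet
  omega

lemma coe_Lmat_inv_mul :
    ((Lmat⁻¹ * g : GL (Fin 2) ℤ) : Mat) =
      !![(g : Mat) 0 0, (g : Mat) 0 1; (g : Mat) 1 0 - (g : Mat) 0 0, (g : Mat) 1 1 - (g : Mat) 0 1] := by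
  ext i j
  fin_cases i <;> fin_cases j <;>
    simp [Matrix.mul_apply, show ((Lmat⁻¹ : GL (Fin 2) ℤ) : Mat) = !![1,0;-1,1] from rfl] <;> ring

lemma coe_Rmat_inv_mul :
    ((Rmat⁻¹ * g : GL (Fin 2) ℤ) : Mat) =
      !![(g : Mat) 0 0 - (g : Mat) 1 0, (g : Mat) 0 1 - (g : Mat) 1 1; (g : Mat) 1 0, (g : Mat) 1 1] := by
  ext i j
  fin_cases i <;> fin_cases j <;>
    simp [Matrix.mul_apply, show ((Rmat⁻¹ : GL (Fin 2) ℤ) : Mat) = !![1,-1;0,1] from rfl] <;> ring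

lemma entrywiseNonneg_Lmat_inv_mul_iff :
    EntrywiseNonneg (Lmat⁻¹ * g) ↔ ∀ j, 0 ≤ (g : Mat) 0 j ∧ (g : Mat) 0 j ≤ (g : Mat) 1 j := by
  simp only [EntrywiseNonneg, coe_Lmat_inv_mul, Fin.forall_fin_two, Matrix.of_apply,
    Matrix.cons_val', Matrix.cons_val_zero, Matrix.cons_val_one, Matrix.cons_val_fin_one,
    sub_nonneg]
  tauto

lemma entrywiseNonneg_Rmat_inv_mul_iff :
    EntrywiseNonneg (Rmat⁻¹ * g) ↔ ∀ j, 0 ≤ (g : Mat) 1 j ∧ (g : Mat) 1 j ≤ (g : Mat) 0 j := by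
  simp only [EntrywiseNonneg, coe_Rmat_inv_mul, Fin.forall_fin_two, Matrix.of_apply,
    Matrix.cons_val', Matrix.cons_val_zero, Matrix.cons_val_one, Matrix.cons_val_fin_one,
    sub_nonneg]
  tauto

end Entries

lemma entrywiseNonneg_of_base {E : GL (Fin 2) ℤ} (hE : E = 1 ∨ E = Fmat) : EntrywiseNonneg E := by
  intro i j
  rcases hE with rfl | rfl <;> fin_cases i <;> fin_cases j <;> decide

lemma not_entrywiseNonneg_inv_mul_of_base {M E : GL (Fin 2) ℤ} (hM : M = Lmat ∨ M = Rmat)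
    (hE : E = 1 ∨ E = Fmat) : ¬ EntrywiseNonneg (M⁻¹ * E) := by
  unfold EntrywiseNonneg
  rcases hM with rfl | rfl <;> rcases hE with rfl | rfl <;> decide

lemma eq_of_entrywiseNonneg_inv_mul {g M M' : GL (Fin 2) ℤ} (hM : M = Lmat ∨ M = Rmat)
    (hM' : M' = Lmat ∨ M' = Rmat) (h : EntrywiseNonneg (M⁻¹ * g))
    (h' : EntrywiseNonneg (M'⁻¹ * g)) : M = M' := by
  have hrows := GL_two_rows_ne g
  rcases hM with rfl | rfl <;> rcases hM' with rfl | rfl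
  · rfl
  · rw [entrywiseNonneg_Lmat_inv_mul_iff, Fin.forall_fin_two] at h
    rw [entrywiseNonneg_Rmat_inv_mul_iff, Fin.forall_fin_two] at h'
    omega
  · rw [entrywiseNonneg_Rmat_inv_mul_iff, Fin.forall_fin_two] at h
    rw [entrywiseNonneg_Lmat_inv_mul_iff, Fin.forall_fin_two] at h'
    omega
  · rfl

lemma entrySum_inv_mul_lt {g M : GL (Fin 2) ℤ} (hM : M = Lmat ∨ M = Rmat)
    (h : EntrywiseNonneg (M⁻¹ * g)) : entrySum (M⁻¹ * g) < entrySum g := by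
  rcases hM with rfl | rfl
  · have hrow := GL_two_row_ne_zero g 0
    rw [entrywiseNonneg_Lmat_inv_mul_iff, Fin.forall_fin_two] at h
    simp only [entrySum, coe_Lmat_inv_mul, Matrix.of_apply, Matrix.cons_val', Matrix.cons_val_zero,
      Matrix.cons_val_one, Matrix.cons_val_fin_one]
    omega
  · have hrow := GL_two_row_ne_zero g 1
    rw [entrywiseNonneg_Rmat_inv_mul_iff, Fin.forall_fin_two] at h
    simp only [entrySum, coe_Rmat_inv_mul, Matrix.of_apply, Matrix.cons_val', Matrix.cons_val_zero,
      Matrix.cons_val_one, Matrix.cons_val_fin_one]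
    omega

lemma entries_eq_identity_of_lt_of_lt {a b c d : ℤ} (hb : 0 ≤ b) (hc : 0 ≤ c) (hca : c < a)
    (hbd : b < d) (hdet : a * d - b * c = 1 ∨ a * d - b * c = -1) :
    a = 1 ∧ b = 0 ∧ c = 0 ∧ d = 1 := by
  have hprod : (c + 1) * (b + 1) ≤ a * d :=
    mul_le_mul (by omega) (by omega) (by omega) (by omega)
  have hb0 : b = 0 := by rcases hdet with h | h <;> nlinarith
  have hc0 : c = 0 := by rcases hdet with h | h <;> nlinarith
  subst hb0 hc0
  have had : a * d = 1 := by omega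
  have ha : a = 1 := by nlinarith
  subst ha
  omega

lemma eq_one_or_Fmat_of_entrywiseNonneg {g : GL (Fin 2) ℤ} (hg : EntrywiseNonneg g)
    (hL : ¬ EntrywiseNonneg (Lmat⁻¹ * g)) (hR : ¬ EntrywiseNonneg (Rmat⁻¹ * g)) :
    g = 1 ∨ g = Fmat := by
  obtain ⟨j, hj⟩ : ∃ j, (g : Mat) 1 j < (g : Mat) 0 j := by
    simpa [entrywiseNonneg_Lmat_inv_mul_iff, hg 0 _, Fin.exists_fin_two, imp_iff_not_or] using hL
  obtain ⟨j', hj'⟩ : ∃ j, (g : Mat) 0 j < (g : Mat) 1 j := by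
    simpa [entrywiseNonneg_Rmat_inv_mul_iff, hg 1 _, Fin.exists_fin_two, imp_iff_not_or] using hR
  have hdet := GL_two_det_eq_one_or_neg_one g
  fin_cases j <;> fin_cases j' <;> simp only [Fin.zero_eta, Fin.mk_one] at hj hj'
  · omega
  · obtain ⟨h00, h01, h10, h11⟩ := entries_eq_identity_of_lt_of_lt (hg 0 1) (hg 1 0) hj hj' hdet
    left
    ext i j
    fin_cases i <;> fin_cases j <;> simp [h00, h01, h10, h11]
  · obtain ⟨h01, h00, h11, h10⟩ := entries_eq_identity_of_lt_of_lt (a := (g : Mat) 0 1)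
      (d := (g : Mat) 1 0) (hg 0 0) (hg 1 1) hj hj' (by omega)
    right
    ext i j
    fin_cases i <;> fin_cases j <;> simp [h00, h01, h10, h11, Fmat]
  · omega

lemma isLRFactorization_nil_iff {g E : GL (Fin 2) ℤ} :
    IsLRFactorization g ([], E) ↔ (E = 1 ∨ E = Fmat) ∧ g = E := by
  constructor
  · rintro ⟨-, hE, hg, -⟩
    exact ⟨hE, by simpa using hg⟩
  · rintro ⟨hE, rfl⟩
    exact ⟨by simp, hE, by simp, fun r => by simpa using entrywiseNonneg_of_base hE⟩

lemma isLRFactorization_cons_iff {g M E : GL (Fin 2) ℤ} {l : List (GL (Fin 2) ℤ)} :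
    IsLRFactorization g (M :: l, E) ↔
      (M = Lmat ∨ M = Rmat) ∧ EntrywiseNonneg g ∧ IsLRFactorization (M⁻¹ * g) (l, E) := by
  constructor
  · rintro ⟨hmem, hE, rfl, hdrop⟩
    rw [List.forall_mem_cons] at hmem
    exact ⟨hmem.1, by simpa [mul_assoc] using hdrop 0, hmem.2, hE, by simp [mul_assoc],
      fun r => hdrop (r + 1)⟩
  · rintro ⟨hM, hg, hmem, hE, hMg, hdrop⟩
    have hg' : g = M * (l.prod * E) := by rw [← hMg, mul_inv_cancel_left]
    refine ⟨List.forall_mem_cons.2 ⟨hM, hmem⟩, hE, by simp [hg', mul_assoc], fun r => ?_⟩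
    cases r with
    | zero => simpa [mul_assoc, ← hg'] using hg
    | succ r => exact hdrop r

lemma IsLRFactorization.entrywiseNonneg {g : GL (Fin 2) ℤ}
    {p : List (GL (Fin 2) ℤ) × GL (Fin 2) ℤ} (h : IsLRFactorization g p) : EntrywiseNonneg g := by
  simpa [← h.2.2.1] using h.2.2.2 0

lemma IsLRFactorization.unique {l : List (GL (Fin 2) ℤ)} :
    ∀ {g E : GL (Fin 2) ℤ} {p : List (GL (Fin 2) ℤ) × GL (Fin 2) ℤ},
      IsLRFactorization g (l, E) → IsLRFactorization g p → (l, E) = p := by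
  induction l with
  | nil =>
    rintro g E ⟨_ | ⟨M', l'⟩, E'⟩ h h'
    · rw [isLRFactorization_nil_iff] at h h'
      rw [← h.2, ← h'.2]
    · rw [isLRFactorization_nil_iff] at h
      rw [isLRFactorization_cons_iff, h.2] at h'
      exact absurd h'.2.2.entrywiseNonneg (not_entrywiseNonneg_inv_mul_of_base h'.1 h.1)
  | cons M l ih =>
    rintro g E ⟨_ | ⟨M', l'⟩, E'⟩ h h'
    · rw [isLRFactorization_nil_iff] at h'
      rw [isLRFactorization_cons_iff, h'.2] at h
      exact absurd h.2.2.entrywiseNonneg (not_entrywiseNonneg_inv_mul_of_base h.1 h'.1)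
    · rw [isLRFactorization_cons_iff] at h h'
      obtain rfl := eq_of_entrywiseNonneg_inv_mul h.1 h'.1 h.2.2.entrywiseNonneg
        h'.2.2.entrywiseNonneg
      simpa using ih h.2.2 h'.2.2

theorem exists_isLRFactorization (g : GL (Fin 2) ℤ) (hg : EntrywiseNonneg g) :
    ∃ p, IsLRFactorization g p := by
  by_cases h : ∃ M, (M = Lmat ∨ M = Rmat) ∧ EntrywiseNonneg (M⁻¹ * g)
  · obtain ⟨M, hM, hMg⟩ := h
    -- these two facts discharge the `termination_by` obligation
    have := entrySum_inv_mul_lt hM hMg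
    have := entrySum_nonneg hMg
    obtain ⟨q, hq⟩ := exists_isLRFactorization (M⁻¹ * g) hMg
    exact ⟨(M :: q.1, q.2), isLRFactorization_cons_iff.2 ⟨hM, hg, hq⟩⟩
  · push Not at h
    have hE := eq_one_or_Fmat_of_entrywiseNonneg hg (h Lmat (.inl rfl)) (h Rmat (.inr rfl))
    exact ⟨([], g), isLRFactorization_nil_iff.2 ⟨hE, rfl⟩⟩
termination_by (entrySum g).toNat

/-- If `g ∈ GL₂(ℤ)` has non-negative entries, then there is a unique
factorization `g = M₁ ⋯ M_k · E` with each `Mᵢ ∈ {L, R}` and `E ∈ {I, F}` such that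
every partial product `M_r ⋯ M_k · E` has all entries non-negative. -/
theorem stmt_2 (g : GL (Fin 2) ℤ)
    (hpos : ∀ i j, 0 ≤ (g : Matrix (Fin 2) (Fin 2) ℤ) i j) :
    ∃! p : List (GL (Fin 2) ℤ) × GL (Fin 2) ℤ,
      (∀ m ∈ p.1, m = Lmat ∨ m = Rmat) ∧
      (p.2 = 1 ∨ p.2 = Fmat) ∧
      g = p.1.prod * p.2 ∧
      ∀ r, ∀ i j,
        0 ≤ (((p.1.drop r).prod * p.2 : GL (Fin 2) ℤ) : Matrix (Fin 2) (Fin 2) ℤ) i j := by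
  obtain ⟨p, hp⟩ := exists_isLRFactorization g hpos
  exact ⟨p, hp, fun q hq => (IsLRFactorization.unique hp hq).symm⟩
end

section
/- Let g ∈ GL₂(ℤ) have infinite order (i.e. gⁿ ≠ I for all integers n ≥ 1). Then some conjugate of g in GL₂(ℤ) lies in the multiplicative submonoid of GL₂(ℤ) generated by the four matrices -I, F, L and R. -/
/-- The matrix `D = diag(1,-1)` as an element of `GL₂(ℤ)`. -/
def Dmat : GL (Fin 2) ℤ := ⟨!![1,0;0,-1], !![1,0;0,-1], by decide, by decide⟩

namespace Stmt3

abbrev cl : Submonoid (GL (Fin 2) ℤ) :=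
  Submonoid.closure ({-1, Fmat, Lmat, Rmat} : Set (GL (Fin 2) ℤ))

lemma neg_one_mem : (-1 : GL (Fin 2) ℤ) ∈ cl :=
  Submonoid.subset_closure (by simp)

lemma Fmem : Fmat ∈ cl := Submonoid.subset_closure (by simp)
lemma Lmem : Lmat ∈ cl := Submonoid.subset_closure (by simp)
lemma Rmem : Rmat ∈ cl := Submonoid.subset_closure (by simp)

lemma fin2_ext {w x y z w' x' y' z' : ℤ} (h1 : w = w') (h2 : x = x')
    (h3 : y = y') (h4 : z = z') : !![w,x;y,z] = !![w',x';y',z'] := by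
  subst h1; subst h2; subst h3; subst h4; rfl

lemma entries (M : GL (Fin 2) ℤ) : ∃ a b c d : ℤ, (M : Matrix (Fin 2) (Fin 2) ℤ) = !![a,b;c,d] :=
  ⟨_, _, _, _, Matrix.eta_fin_two _⟩

lemma val_det (M : GL (Fin 2) ℤ) {a b c d : ℤ}
    (hM : (M : Matrix (Fin 2) (Fin 2) ℤ) = !![a,b;c,d]) :
    a * d - b * c = 1 ∨ a * d - b * c = -1 := by
  have h : (M : Matrix (Fin 2) (Fin 2) ℤ).det * ((M⁻¹ : GL (Fin 2) ℤ) : Matrix (Fin 2) (Fin 2) ℤ).det = 1 := by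
    rw [← Matrix.det_mul, ← Units.val_mul, mul_inv_cancel, Units.val_one, Matrix.det_one]
  have h2 : IsUnit (M : Matrix (Fin 2) (Fin 2) ℤ).det := IsUnit.of_mul_eq_one _ h
  rw [hM, Matrix.det_fin_two_of] at h2
  exact Int.isUnit_iff.mp h2

lemma mul_val (g h : GL (Fin 2) ℤ) {a b c d e f u v : ℤ}
    (h1 : (g : Matrix (Fin 2) (Fin 2) ℤ) = !![a,b;c,d])
    (h2 : (h : Matrix (Fin 2) (Fin 2) ℤ) = !![e,f;u,v]) :
    ((g * h : GL (Fin 2) ℤ) : Matrix (Fin 2) (Fin 2) ℤ)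
      = !![a*e+b*u, a*f+b*v; c*e+d*u, c*f+d*v] := by
  rw [Units.val_mul, h1, h2, Matrix.mul_fin_two]

/-- Any nonnegative element of `GL₂(ℤ)` is in the closure. -/
lemma nonneg_mem : ∀ (n : ℕ) (M : GL (Fin 2) ℤ),
    ((M : Matrix (Fin 2) (Fin 2) ℤ) 0 0 + (M : Matrix (Fin 2) (Fin 2) ℤ) 0 1
      + (M : Matrix (Fin 2) (Fin 2) ℤ) 1 0 + (M : Matrix (Fin 2) (Fin 2) ℤ) 1 1).toNat ≤ n →
    (∀ i j, 0 ≤ (M : Matrix (Fin 2) (Fin 2) ℤ) i j) → M ∈ cl := by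
  intro n
  induction n using Nat.strong_induction_on with
  | _ n ih =>
  intro M hsum hpos
  obtain ⟨a, b, c, d, hM⟩ := entries M
  have ea : (M : Matrix (Fin 2) (Fin 2) ℤ) 0 0 = a := by rw [hM]; simp
  have eb : (M : Matrix (Fin 2) (Fin 2) ℤ) 0 1 = b := by rw [hM]; simp
  have ec : (M : Matrix (Fin 2) (Fin 2) ℤ) 1 0 = c := by rw [hM]; simp
  have ed : (M : Matrix (Fin 2) (Fin 2) ℤ) 1 1 = d := by rw [hM]; simp
  have ha : 0 ≤ a := by have := hpos 0 0; rwa [ea] at this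
  have hb : 0 ≤ b := by have := hpos 0 1; rwa [eb] at this
  have hc : 0 ≤ c := by have := hpos 1 0; rwa [ec] at this
  have hd : 0 ≤ d := by have := hpos 1 1; rwa [ed] at this
  rw [ea, eb, ec, ed] at hsum
  have hdet := val_det M hM
  by_cases hr : c ≤ a ∧ d ≤ b
  · -- factor out R on the left
    have hcd : 1 ≤ c + d := by
      by_contra hcon
      push_neg at hcon
      have hc0 : c = 0 := by omega
      have hd0 : d = 0 := by omega
      rw [hc0, hd0] at hdet
      simp at hdet
    set M' := Rmat⁻¹ * M with hM'def
    have hval : (M' : Matrix (Fin 2) (Fin 2) ℤ) = !![a-c, b-d; c, d] := by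
      have h1 : (M' : Matrix (Fin 2) (Fin 2) ℤ)
          = (!![1,-1;0,1] : Matrix (Fin 2) (Fin 2) ℤ) * (M : Matrix (Fin 2) (Fin 2) ℤ) := rfl
      rw [h1, hM, Matrix.mul_fin_two]
      exact fin2_ext (by ring) (by ring) (by ring) (by ring)
    have e1 : (M' : Matrix (Fin 2) (Fin 2) ℤ) 0 0 = a - c := by rw [hval]; simp
    have e2 : (M' : Matrix (Fin 2) (Fin 2) ℤ) 0 1 = b - d := by rw [hval]; simp
    have e3 : (M' : Matrix (Fin 2) (Fin 2) ℤ) 1 0 = c := by rw [hval]; simp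
    have e4 : (M' : Matrix (Fin 2) (Fin 2) ℤ) 1 1 = d := by rw [hval]; simp
    have hmem : M' ∈ cl := by
      apply ih (a + b).toNat (by omega) M' (by rw [e1, e2, e3, e4]; omega)
      intro i j
      fin_cases i <;> fin_cases j <;> simp [hval] <;> omega
    have : M = Rmat * M' := (mul_inv_cancel_left Rmat M).symm
    rw [this]
    exact Submonoid.mul_mem _ Rmem hmem
  · by_cases hl : a ≤ c ∧ b ≤ d
    · -- factor out L on the left
      have hab : 1 ≤ a + b := by
        by_contra hcon
        push_neg at hcon
        have ha0 : a = 0 := by omega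
        have hb0 : b = 0 := by omega
        rw [ha0, hb0] at hdet
        simp at hdet
      set M' := Lmat⁻¹ * M with hM'def
      have hval : (M' : Matrix (Fin 2) (Fin 2) ℤ) = !![a, b; c-a, d-b] := by
        have h1 : (M' : Matrix (Fin 2) (Fin 2) ℤ)
            = (!![1,0;-1,1] : Matrix (Fin 2) (Fin 2) ℤ) * (M : Matrix (Fin 2) (Fin 2) ℤ) := rfl
        rw [h1, hM, Matrix.mul_fin_two]
        exact fin2_ext (by ring) (by ring) (by ring) (by ring)
      have e1 : (M' : Matrix (Fin 2) (Fin 2) ℤ) 0 0 = a := by rw [hval]; simp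
      have e2 : (M' : Matrix (Fin 2) (Fin 2) ℤ) 0 1 = b := by rw [hval]; simp
      have e3 : (M' : Matrix (Fin 2) (Fin 2) ℤ) 1 0 = c - a := by rw [hval]; simp
      have e4 : (M' : Matrix (Fin 2) (Fin 2) ℤ) 1 1 = d - b := by rw [hval]; simp
      have hmem : M' ∈ cl := by
        apply ih (c + d).toNat (by omega) M' (by rw [e1, e2, e3, e4]; omega)
        intro i j
        fin_cases i <;> fin_cases j <;> simp [hval] <;> omega
      have : M = Lmat * M' := (mul_inv_cancel_left Lmat M).symm
      rw [this]
      exact Submonoid.mul_mem _ Lmem hmem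
    · -- crossing cases: M = 1 or M = F
      push_neg at hr hl
      have hcross : (a < c ∧ d < b) ∨ (b < d ∧ c < a) := by
        rcases le_or_gt c a with h1 | h1
        · have hbd := hr h1
          rcases le_or_gt a c with h2 | h2
          · have hdb := hl h2; omega
          · exact Or.inr ⟨hbd, h2⟩
        · have hdb := hl (le_of_lt h1)
          exact Or.inl ⟨h1, hdb⟩
      rcases hcross with ⟨h1, h2⟩ | ⟨h1, h2⟩
      · -- M = F
        have hmul : (a+1)*(d+1) ≤ c * b := mul_le_mul (by omega) (by omega) (by omega) (by omega)
        have ha0 : a = 0 := by rcases hdet with h | h <;> nlinarith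
        have hd0 : d = 0 := by rcases hdet with h | h <;> nlinarith
        subst ha0; subst hd0
        have hbc : b * c = 1 := by
          rcases hdet with h | h
          · exfalso; nlinarith
          · linarith
        have hb1 : b = 1 ∧ c = 1 := by
          rcases Int.mul_eq_one_iff_eq_one_or_neg_one.mp hbc with ⟨x, y⟩ | ⟨x, y⟩
          · exact ⟨x, y⟩
          · omega
        have hMF : M = Fmat := by
          apply Units.ext
          rw [hM, hb1.1, hb1.2]
          rfl
        rw [hMF]; exact Fmem
      · -- M = 1
        have hmul : (b+1)*(c+1) ≤ d * a := mul_le_mul (by omega) (by omega) (by omega) (by omega)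
        have hb0 : b = 0 := by rcases hdet with h | h <;> nlinarith
        have hc0 : c = 0 := by rcases hdet with h | h <;> nlinarith
        subst hb0; subst hc0
        have had : a * d = 1 := by
          rcases hdet with h | h
          · linarith
          · exfalso; nlinarith
        have ha1 : a = 1 ∧ d = 1 := by
          rcases Int.mul_eq_one_iff_eq_one_or_neg_one.mp had with ⟨x, y⟩ | ⟨x, y⟩
          · exact ⟨x, y⟩
          · omega
        have hM1 : M = 1 := by
          apply Units.ext
          rw [hM, ha1.1, ha1.2, Units.val_one, Matrix.one_fin_two]
        rw [hM1]; exact Submonoid.one_mem _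

/-- Conjugation by `Dmat` entries. -/
lemma conjD_val (g : GL (Fin 2) ℤ) {a b c d : ℤ}
    (hM : (g : Matrix (Fin 2) (Fin 2) ℤ) = !![a,b;c,d]) :
    ((Dmat * g * Dmat⁻¹ : GL (Fin 2) ℤ) : Matrix (Fin 2) (Fin 2) ℤ) = !![a,-b;-c,d] := by
  have h1 : ((Dmat * g * Dmat⁻¹ : GL (Fin 2) ℤ) : Matrix (Fin 2) (Fin 2) ℤ)
      = (!![1,0;0,-1] : Matrix (Fin 2) (Fin 2) ℤ) * (g : Matrix (Fin 2) (Fin 2) ℤ)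
        * !![1,0;0,-1] := rfl
  rw [h1, hM, Matrix.mul_fin_two, Matrix.mul_fin_two]
  exact fin2_ext (by ring) (by ring) (by ring) (by ring)

/-- Finishing lemma: `b*c ≥ 1` plus determinant/trace conditions give a conjugate in the closure. -/
lemma finish (g : GL (Fin 2) ℤ) {a b c d : ℤ}
    (hM : (g : Matrix (Fin 2) (Fin 2) ℤ) = !![a,b;c,d])
    (htr : 1 ≤ a + d) (hbc : 1 ≤ b * c) :
    ∃ h : GL (Fin 2) ℤ, h * g * h⁻¹ ∈ cl := by
  have hdet := val_det g hM
  have had : 0 ≤ a * d := by rcases hdet with h | h <;> nlinarith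
  have ha : 0 ≤ a := by
    by_contra hcon
    push_neg at hcon
    have : d ≤ 0 := by nlinarith
    omega
  have hd : 0 ≤ d := by
    by_contra hcon
    push_neg at hcon
    have : a ≤ 0 := by nlinarith
    omega
  have hsigns : (1 ≤ b ∧ 1 ≤ c) ∨ (b ≤ -1 ∧ c ≤ -1) := by
    rcases lt_trichotomy b 0 with h | h | h
    · right
      constructor
      · omega
      · by_contra hcon; push_neg at hcon; nlinarith
    · rw [h] at hbc; simp at hbc
    · left
      constructor
      · omega
      · by_contra hcon; push_neg at hcon; nlinarith
  rcases hsigns with ⟨hb, hc⟩ | ⟨hb, hc⟩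
  · refine ⟨1, ?_⟩
    have : (1 : GL (Fin 2) ℤ) * g * 1⁻¹ = g := by simp
    rw [this]
    apply nonneg_mem _ g le_rfl
    intro i j
    fin_cases i <;> fin_cases j <;> simp [hM] <;> omega
  · refine ⟨Dmat, ?_⟩
    have hval := conjD_val g hM
    apply nonneg_mem _ (Dmat * g * Dmat⁻¹) le_rfl
    intro i j
    fin_cases i <;> fin_cases j <;> simp [hval] <;> omega

/-- Triangular case: `b = 0`. -/
lemma triangular (g : GL (Fin 2) ℤ) {a c d : ℤ}
    (hM : (g : Matrix (Fin 2) (Fin 2) ℤ) = !![a,0;c,d])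
    (htr : 1 ≤ a + d) :
    ∃ h : GL (Fin 2) ℤ, h * g * h⁻¹ ∈ cl := by
  have hdet := val_det g hM
  have had1 : a * d = 1 ∨ a * d = -1 := by
    rcases hdet with h | h
    · left; linarith
    · right; linarith
  have hval : a = 1 ∧ d = 1 := by
    rcases had1 with h | h
    · rcases Int.mul_eq_one_iff_eq_one_or_neg_one.mp h with ⟨x, y⟩ | ⟨x, y⟩
      · exact ⟨x, y⟩
      · omega
    · have h' : a * (-d) = 1 := by linarith
      rcases Int.mul_eq_one_iff_eq_one_or_neg_one.mp h' with ⟨x, y⟩ | ⟨x, y⟩ <;> omega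
  obtain ⟨ha1, hd1⟩ := hval
  subst ha1; subst hd1
  by_cases hc : 0 ≤ c
  · refine ⟨1, ?_⟩
    have h1 : (1 : GL (Fin 2) ℤ) * g * 1⁻¹ = g := by simp
    rw [h1]
    apply nonneg_mem _ g le_rfl
    intro i j
    fin_cases i <;> fin_cases j <;> simp [hM] <;> omega
  · refine ⟨Dmat, ?_⟩
    have hval2 := conjD_val g hM
    apply nonneg_mem _ _ le_rfl
    intro i j
    fin_cases i <;> fin_cases j <;> simp [hval2] <;> omega

lemma exists_delta (b m : ℤ) (hb : b ≠ 0) : ∃ δ : ℤ, (m - 2*b*δ)^2 ≤ b^2 := by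
  have hB : 0 < |b| := abs_pos.mpr hb
  set B := |b| with hBdef
  have hb2 : b^2 = B^2 := (sq_abs b).symm
  have h2B : (0:ℤ) < 2*B := by linarith
  set δ₀ := (m + B) / (2*B) with hδ₀
  have h1 : 0 ≤ (m + B) % (2*B) := Int.emod_nonneg _ (by omega)
  have h2 : (m + B) % (2*B) < 2*B := Int.emod_lt_of_pos _ h2B
  have h3 : 2*B*((m + B)/(2*B)) + (m + B) % (2*B) = m + B := Int.mul_ediv_add_emod _ _
  have key : (m - 2*B*δ₀)^2 ≤ B^2 := by
    have e : m - 2*B*δ₀ = (m + B) % (2*B) - B := by rw [hδ₀]; linarith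
    rw [e]
    nlinarith [h1, h2]
  rcases abs_cases b with ⟨hab, hsgn⟩ | ⟨hab, hsgn⟩
  · refine ⟨δ₀, ?_⟩
    rw [hb2]
    have h : 2*b*δ₀ = 2*B*δ₀ := by rw [hBdef, hab]
    rw [h]; exact key
  · refine ⟨-δ₀, ?_⟩
    rw [hb2]
    have h : 2*b*(-δ₀) = 2*B*δ₀ := by rw [hBdef, hab]; ring
    rw [h]; exact key

/-- The step conjugation: `g' = (F R^δ)⁻¹ g (F R^δ)`. -/
lemma conjP (g : GL (Fin 2) ℤ) (δ : ℤ) {a b c d : ℤ}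
    (hM : (g : Matrix (Fin 2) (Fin 2) ℤ) = !![a,b;c,d]) :
    ∃ p : GL (Fin 2) ℤ,
      ((p⁻¹ * g * p : GL (Fin 2) ℤ) : Matrix (Fin 2) (Fin 2) ℤ)
        = !![d - δ*b, c + δ*(d-a) - δ^2*b; b, a + δ*b] := by
  have hpf1 : (!![0,1;1,δ] : Matrix (Fin 2) (Fin 2) ℤ) * !![-δ,1;1,0] = 1 := by
    rw [Matrix.mul_fin_two, Matrix.one_fin_two]
    exact fin2_ext (by ring) (by ring) (by ring) (by ring)
  have hpf2 : (!![-δ,1;1,0] : Matrix (Fin 2) (Fin 2) ℤ) * !![0,1;1,δ] = 1 := by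
    rw [Matrix.mul_fin_two, Matrix.one_fin_two]
    exact fin2_ext (by ring) (by ring) (by ring) (by ring)
  refine ⟨⟨!![0,1;1,δ], !![-δ,1;1,0], hpf1, hpf2⟩, ?_⟩
  have h1 : ((⟨!![0,1;1,δ], !![-δ,1;1,0], hpf1, hpf2⟩ : GL (Fin 2) ℤ)⁻¹ * g
      * (⟨!![0,1;1,δ], !![-δ,1;1,0], hpf1, hpf2⟩ : GL (Fin 2) ℤ) : GL (Fin 2) ℤ).val
      = (!![-δ,1;1,0] : Matrix (Fin 2) (Fin 2) ℤ) * (g : Matrix (Fin 2) (Fin 2) ℤ)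
        * !![0,1;1,δ] := rfl
  rw [h1, hM, Matrix.mul_fin_two, Matrix.mul_fin_two]
  exact fin2_ext (by ring) (by ring) (by ring) (by ring)

lemma conj_comp (g p : GL (Fin 2) ℤ)
    (h : ∃ h : GL (Fin 2) ℤ, h * (p⁻¹ * g * p) * h⁻¹ ∈ cl) :
    ∃ h' : GL (Fin 2) ℤ, h' * g * h'⁻¹ ∈ cl := by
  obtain ⟨h, hh⟩ := h
  refine ⟨h * p⁻¹, ?_⟩
  rw [mul_inv_rev, inv_inv]
  simp only [mul_assoc] at hh ⊢
  exact hh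

/-- Main reduction: descent on `|b|`. -/
lemma main : ∀ (N : ℕ) (g : GL (Fin 2) ℤ) (a b c d : ℤ),
    (g : Matrix (Fin 2) (Fin 2) ℤ) = !![a,b;c,d] →
    1 ≤ a + d →
    4 * (a*d - b*c) ≤ (a + d)^2 →
    b.natAbs ≤ N →
    ∃ h : GL (Fin 2) ℤ, h * g * h⁻¹ ∈ cl := by
  intro N
  induction N with
  | zero =>
    intro g a b c d hM htr hD hb
    have hb0 : b = 0 := by omega
    subst hb0
    exact triangular g hM htr
  | succ N ih =>
    intro g a b c d hM htr hD hb
    by_cases hb0 : b = 0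
    · subst hb0
      exact triangular g hM htr
    by_cases hbc : 1 ≤ b * c
    · exact finish g hM htr hbc
    -- reduction step
    obtain ⟨δ, hδ⟩ := exists_delta b (d - a) hb0
    obtain ⟨p, hval⟩ := conjP g δ hM
    set g' := (p⁻¹ * g * p : GL (Fin 2) ℤ) with hg'
    set b' := c + δ*(d-a) - δ^2*b with hb'def
    have htr' : 1 ≤ (d - δ*b) + (a + δ*b) := by linarith
    have hD' : 4 * ((d - δ*b)*(a + δ*b) - b'*b) ≤ ((d - δ*b) + (a + δ*b))^2 := by
      have e1 : (d - δ*b)*(a + δ*b) - b'*b = a*d - b*c := by rw [hb'def]; ring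
      have e2 : (d - δ*b) + (a + δ*b) = a + d := by ring
      rw [e1, e2]; exact hD
    have key : 4*(b*b') = ((a+d)^2 - 4*(a*d - b*c)) - (d - a - 2*b*δ)^2 := by
      rw [hb'def]; ring
    by_cases hcase : (d - a - 2*b*δ)^2 < (a+d)^2 - 4*(a*d - b*c)
    · -- new b'*c' ≥ 1 : finish on g'
      have h4 : 0 < 4*(b*b') := by rw [key]; linarith
      have hpos : 0 < b * b' := by linarith
      have h1 : 1 ≤ b' * b := by
        have := Int.lt_iff_add_one_le.mp hpos
        linarith [mul_comm b b']
      apply conj_comp g p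
      exact finish g' hval htr' h1
    · -- |b'| < |b| : induct
      push_neg at hcase
      have h5 : -(b^2) ≤ 4*(b*b') := by
        rw [key]
        have : (d - a - 2*b*δ)^2 ≤ b^2 := hδ
        linarith
      have h6 : 4*(b*b') ≤ 0 := by rw [key]; linarith
      have habs : |4*(b*b')| ≤ b^2 := abs_le.mpr ⟨h5, by linarith⟩
      have e : |4*(b*b')| = 4 * (|b| * |b'|) := by
        rw [abs_mul, abs_mul]
        norm_num
      have e2 : b^2 = |b| * |b| := by rw [abs_mul_abs_self]; ring
      rw [e, e2] at habs
      have hBpos : 1 ≤ |b| := Int.one_le_abs (by omega)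
      have hlt' : |b'| < |b| := by nlinarith [abs_nonneg b']
      have hlt : b'.natAbs < b.natAbs := by
        rw [Int.abs_eq_natAbs, Int.abs_eq_natAbs] at hlt'
        exact_mod_cast hlt' 
      apply conj_comp g p
      exact ih g' (d - δ*b) b' b (a + δ*b) hval htr' hD' (by omega)

end Stmt3

/-- The submonoid of `GL₂(ℤ)` generated by `-I, F, L, R` contains a conjugate
of every infinite order matrix in `GL₂(ℤ)`. -/
theorem stmt_3 (g : GL (Fin 2) ℤ) (hg : ∀ n : ℕ, 1 ≤ n → g ^ n ≠ 1) :
    ∃ h : GL (Fin 2) ℤ,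
      h * g * h⁻¹ ∈ Submonoid.closure ({-1, Fmat, Lmat, Rmat} : Set (GL (Fin 2) ℤ)) := by
  obtain ⟨a, b, c, d, hM⟩ := Stmt3.entries g
  have hdet := Stmt3.val_det g hM
  have hMneg : ((-g : GL (Fin 2) ℤ) : Matrix (Fin 2) (Fin 2) ℤ) = !![-a,-b;-c,-d] := by
    rw [Units.val_neg, hM]
    ext i j
    fin_cases i <;> fin_cases j <;> simp
  have hsq := Stmt3.mul_val g g hM hM
  have hneg1 : ((-1 : GL (Fin 2) ℤ) : Matrix (Fin 2) (Fin 2) ℤ) = !![-1,0;0,-1] := by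
    rw [Units.val_neg, Units.val_one, Matrix.one_fin_two]
    ext i j
    fin_cases i <;> fin_cases j <;> simp
  rcases hdet with hε | hε
  · -- det = 1
    by_cases h1 : 2 ≤ a + d
    · exact Stmt3.main b.natAbs g a b c d hM (by omega) (by nlinarith) le_rfl
    by_cases h2 : a + d ≤ -2
    · obtain ⟨h, hh⟩ := Stmt3.main (-b).natAbs (-g) (-a) (-b) (-c) (-d) hMneg
        (by omega) (by nlinarith) le_rfl
      refine ⟨h, ?_⟩
      have heq : h * g * h⁻¹ = (-1) * (h * (-g) * h⁻¹) := by
        simp [mul_neg, neg_mul, neg_neg]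
      rw [heq]
      exact Submonoid.mul_mem _ Stmt3.neg_one_mem hh
    · exfalso
      have ht3 : a + d = -1 ∨ a + d = 0 ∨ a + d = 1 := by omega
      rcases ht3 with ht | ht | ht
      · -- trace -1 : g^3 = 1
        have hsq' : ((g * g : GL (Fin 2) ℤ) : Matrix (Fin 2) (Fin 2) ℤ)
            = !![-a-1, -b; -c, -d-1] := by
          rw [hsq]
          exact Stmt3.fin2_ext (by linear_combination a*ht - hε) (by linear_combination b*ht)
            (by linear_combination c*ht) (by linear_combination d*ht - hε)
        have hcube := Stmt3.mul_val (g*g) g hsq' hM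
        have h3 : g*g*g = 1 := by
          apply Units.ext
          rw [hcube, Units.val_one, Matrix.one_fin_two]
          exact Stmt3.fin2_ext (by linear_combination (-a)*ht + hε) (by linear_combination (-b)*ht)
            (by linear_combination (-c)*ht) (by linear_combination (-d)*ht + hε)
        have hp : g^3 = 1 := by
          have e : g^3 = g*g*g := by rw [pow_succ, pow_succ, pow_one]
          rw [e, h3]
        exact hg 3 (by norm_num) hp
      · -- trace 0 : g^4 = 1
        have hsq' : ((g * g : GL (Fin 2) ℤ) : Matrix (Fin 2) (Fin 2) ℤ) = !![-1,0;0,-1] := by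
          rw [hsq]
          exact Stmt3.fin2_ext (by linear_combination a*ht - hε) (by linear_combination b*ht)
            (by linear_combination c*ht) (by linear_combination d*ht - hε)
        have h2' : g*g = -1 := by
          apply Units.ext
          rw [hsq', hneg1]
        have hp : g^4 = 1 := by
          have e : g^4 = (g*g)*(g*g) := by rw [show (4:ℕ)=2+2 from rfl, pow_add, sq]
          rw [e, h2']
          simp
        exact hg 4 (by norm_num) hp
      · -- trace 1 : g^6 = 1
        have hsq' : ((g * g : GL (Fin 2) ℤ) : Matrix (Fin 2) (Fin 2) ℤ)
            = !![a-1, b; c, d-1] := by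
          rw [hsq]
          exact Stmt3.fin2_ext (by linear_combination a*ht - hε) (by linear_combination b*ht)
            (by linear_combination c*ht) (by linear_combination d*ht - hε)
        have hcube := Stmt3.mul_val (g*g) g hsq' hM
        have h3 : g*g*g = -1 := by
          apply Units.ext
          rw [hcube, hneg1]
          exact Stmt3.fin2_ext (by linear_combination a*ht - hε) (by linear_combination b*ht)
            (by linear_combination c*ht) (by linear_combination d*ht - hε)
        have hp : g^6 = 1 := by
          have e : g^6 = (g*g*g)*(g*g*g) := by
            rw [show (6:ℕ)=3+3 from rfl, pow_add, show (3:ℕ)=2+1 from rfl, pow_add, sq, pow_one]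
          rw [e, h3]
          simp
        exact hg 6 (by norm_num) hp
  · -- det = -1
    by_cases h1 : 1 ≤ a + d
    · exact Stmt3.main b.natAbs g a b c d hM h1 (by nlinarith [sq_nonneg (a+d)]) le_rfl
    by_cases h2 : a + d ≤ -1
    · obtain ⟨h, hh⟩ := Stmt3.main (-b).natAbs (-g) (-a) (-b) (-c) (-d) hMneg
        (by omega) (by nlinarith [sq_nonneg (a+d)]) le_rfl
      refine ⟨h, ?_⟩
      have heq : h * g * h⁻¹ = (-1) * (h * (-g) * h⁻¹) := by
        simp [mul_neg, neg_mul, neg_neg]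
      rw [heq]
      exact Submonoid.mul_mem _ Stmt3.neg_one_mem hh
    · exfalso
      have ht : a + d = 0 := by omega
      have hsq' : ((g * g : GL (Fin 2) ℤ) : Matrix (Fin 2) (Fin 2) ℤ) = !![1,0;0,1] := by
        rw [hsq]
        exact Stmt3.fin2_ext (by linear_combination a*ht - hε) (by linear_combination b*ht)
          (by linear_combination c*ht) (by linear_combination d*ht - hε)
      have h2' : g*g = 1 := by
        apply Units.ext
        rw [hsq', Units.val_one, Matrix.one_fin_two]
      have hp : g^2 = 1 := by
        have e : g^2 = g*g := sq g
        rw [e, h2']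
      exact hg 2 (by norm_num) hp
end

section
/- Let F_n be a free group of finite rank n and let φ ∈ Aut(F_n) be such that φ^q is an inner automorphism of F_n for some integer q ≥ 1 (i.e. the class of φ has finite order in Out(F_n)). Then the semidirect product F_n ⋊_φ ℤ contains a subgroup of finite index which is isomorphic to F_n × ℤ. -/
/-!
If `α ^ k = conj g` with `k ≠ 0`, the element `z = g⁻¹ tᵏ` of `N ⋊_α ℤ` commutes with `N`,
since `tᵏ` acts on `N` as conjugation by `g`. Hence `(x, m) ↦ x zᵐ` is a homomorphism
`N × ℤ → N ⋊_α ℤ`. It is injective because `z` projects to `k ≠ 0` in `ℤ`, and its image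
contains the preimage of `kℤ`, which has index `|k|`.
-/

/-- The mapping torus `N ⋊_α ℤ` of a group `N` by an automorphism `α`:
the semidirect product formed via the homomorphism `ℤ → Aut(N)` sending `1` to `α`. -/
abbrev MappingTorus {N : Type*} [Group N] (α : MulAut N) : Type _ :=
  SemidirectProduct N (Multiplicative ℤ) (zpowersHom (MulAut N) α)

namespace SemidirectProduct

variable {N : Type*} [Group N] {φ : Multiplicative ℤ →* MulAut N}

lemma finiteIndex_comap_rightHom_zpowers {k : ℤ} (hk : k ≠ 0) :
    ((Subgroup.zpowers (Multiplicative.ofAdd k)).comap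
      (rightHom : N ⋊[φ] Multiplicative ℤ →* Multiplicative ℤ)).FiniteIndex := by
  constructor
  rw [Subgroup.index_comap_of_surjective _ (rightHom_surjective (φ := φ))]
  have hzpowers : Subgroup.zpowers (Multiplicative.ofAdd k) =
      AddSubgroup.toSubgroup (AddSubgroup.zmultiples k) := rfl
  rw [hzpowers, AddSubgroup.index_toSubgroup, Int.index_zmultiples]
  omega

variable (z : N ⋊[φ] Multiplicative ℤ) (hz : ∀ x : N, Commute (inl x) z)

def inlMulZPowersHom : N × Multiplicative ℤ →* N ⋊[φ] Multiplicative ℤ :=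
  MonoidHom.noncommCoprod inl (zpowersHom _ z) fun x _ => (hz x).zpow_right _

lemma inlMulZPowersHom_apply (p : N × Multiplicative ℤ) :
    inlMulZPowersHom z hz p = inl p.1 * z ^ Multiplicative.toAdd p.2 := rfl

variable {z hz} {k : ℤ}

lemma rightHom_inlMulZPowersHom (hzk : rightHom z = Multiplicative.ofAdd k)
    (p : N × Multiplicative ℤ) :
    rightHom (inlMulZPowersHom z hz p) = Multiplicative.ofAdd (k * Multiplicative.toAdd p.2) := by
  rw [inlMulZPowersHom_apply, map_mul, rightHom_inl, one_mul, map_zpow, hzk, ← ofAdd_zsmul,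
    smul_eq_mul, mul_comm]

lemma inlMulZPowersHom_injective (hzk : rightHom z = Multiplicative.ofAdd k) (hk : k ≠ 0) :
    Function.Injective (inlMulZPowersHom z hz) := by
  intro p p' h
  have hsnd : p.2 = p'.2 := by
    have hright := congrArg rightHom h
    rw [rightHom_inlMulZPowersHom hzk, rightHom_inlMulZPowersHom hzk] at hright
    exact Multiplicative.toAdd.injective <|
      mul_left_cancel₀ hk (Multiplicative.ofAdd.injective hright)
  have hfst : p.1 = p'.1 := by
    rw [inlMulZPowersHom_apply, inlMulZPowersHom_apply, hsnd] at h
    exact inl_injective (mul_right_cancel h)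
  exact Prod.ext hfst hsnd

lemma comap_rightHom_zpowers_le_range (hzk : rightHom z = Multiplicative.ofAdd k) :
    (Subgroup.zpowers (Multiplicative.ofAdd k)).comap rightHom ≤
      (inlMulZPowersHom z hz).range := by
  rintro p ⟨m, hm⟩
  have hker : p * (z ^ m)⁻¹ ∈ (inl : N →* N ⋊[φ] Multiplicative ℤ).range := by
    rw [range_inl_eq_ker_rightHom, MonoidHom.mem_ker, map_mul, map_inv, map_zpow, hzk, ← hm]
    exact mul_inv_cancel _
  obtain ⟨x, hx⟩ := hker
  exact ⟨(x, Multiplicative.ofAdd m),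
    by rw [inlMulZPowersHom_apply, hx, toAdd_ofAdd, inv_mul_cancel_right]⟩

theorem exists_finiteIndex_mulEquiv_prod_of_commute {k : ℤ} (hk : k ≠ 0)
    (z : N ⋊[φ] Multiplicative ℤ) (hz : ∀ x : N, Commute (inl x) z)
    (hzk : rightHom z = Multiplicative.ofAdd k) :
    ∃ H : Subgroup (N ⋊[φ] Multiplicative ℤ), H.FiniteIndex ∧
      Nonempty (H ≃* N × Multiplicative ℤ) :=
  haveI := finiteIndex_comap_rightHom_zpowers (φ := φ) hk
  ⟨_, Subgroup.finiteIndex_of_le (comap_rightHom_zpowers_le_range (hz := hz) hzk),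
    ⟨(MonoidHom.ofInjective (inlMulZPowersHom_injective hzk hk)).symm⟩⟩

end SemidirectProduct

namespace MappingTorus

variable {N : Type*} [Group N] {α : MulAut N}

lemma commute_inl_mk_of_zpow_eq_conj {k : ℤ} {g : N} (h : α ^ k = MulAut.conj g) (x : N) :
    Commute (SemidirectProduct.inl x) (⟨g⁻¹, Multiplicative.ofAdd k⟩ : MappingTorus α) := by
  refine SemidirectProduct.ext ?_ ?_
  · simp [SemidirectProduct.mul_left, h, mul_assoc]
  · simp [SemidirectProduct.mul_right]

theorem exists_finiteIndex_mulEquiv_prod_of_zpow_eq_conj {k : ℤ} (hk : k ≠ 0) {g : N}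
    (h : α ^ k = MulAut.conj g) :
    ∃ H : Subgroup (MappingTorus α), H.FiniteIndex ∧
      Nonempty (H ≃* N × Multiplicative ℤ) :=
  SemidirectProduct.exists_finiteIndex_mulEquiv_prod_of_commute hk _
    (commute_inl_mk_of_zpow_eq_conj h) rfl

end MappingTorus

/-- If `φ ∈ Aut(F_n)` has a power `φ^q` (`q ≥ 1`) which is inner (i.e. `[φ]`
has finite order in `Out(F_n)`), then `F_n ⋊_φ ℤ` has a finite index subgroup isomorphic
to `F_n × ℤ`. -/
theorem stmt_7 (n : ℕ) (φ : MulAut (FreeGroup (Fin n))) (q : ℕ) (hq : 1 ≤ q)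
    (hinner : ∃ g : FreeGroup (Fin n), φ ^ q = MulAut.conj g) :
    ∃ H : Subgroup (MappingTorus φ), H.FiniteIndex ∧
      Nonempty (H ≃* FreeGroup (Fin n) × Multiplicative ℤ) := by
  obtain ⟨g, hg⟩ := hinner
  exact MappingTorus.exists_finiteIndex_mulEquiv_prod_of_zpow_eq_conj (k := q) (by omega)
    (by rwa [zpow_natCast])
end

section
/- Let θ : F(a,b) → F(a,b) be the endomorphism of the free group on two generators determined by θ(a) = ab and θ(b) = ba. Then θ is injective. -/
/-!
Ping-pong for `F(a,b)` acting on itself by left multiplication. For a generator `x` let `x̄` be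
the other one, `X x` the reduced words starting with `x` and `Y x` those starting with `x̄⁻¹`;
these four sets are pairwise disjoint. Then `θ x = x x̄` maps the complement of `Y x` into `X x`,
and `(θ x)⁻¹ = x̄⁻¹ x⁻¹` maps the complement of `X x` into `Y x`, since in each case no letter
cancels.
-/

/-- The endomorphism `θ` of the free group `F(a,b)` (with `a = of true`, `b = of false`)
determined by `θ(a) = ab` and `θ(b) = ba`. -/
def θ : FreeGroup Bool →* FreeGroup Bool :=
  FreeGroup.lift fun x : Bool =>
    if x then FreeGroup.of true * FreeGroup.of false
    else FreeGroup.of false * FreeGroup.of true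

namespace FreeGroup

variable {α : Type*} [DecidableEq α]

theorem startsWith_mk_pair_mul {v w : α × Bool} (hvw : w ≠ (v.1, !v.2)) {g : FreeGroup α}
    (hg : g ∉ startsWith (w.1, !w.2)) : mk [v, w] * g ∈ startsWith v := by
  rw [show [v, w] = [v] ++ [w] from rfl, ← mul_mk, mul_assoc]
  exact startsWith_mk_mul _
    ((startsWith.disjoint_iff_ne.mpr hvw).notMem_of_mem_left (startsWith_mk_mul g hg))

end FreeGroup

open FreeGroup

theorem θ_eq_lift : θ = FreeGroup.lift fun i => mk [(i, true), (!i, true)] := by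
  ext i
  cases i <;> rfl

/-- The endomorphism `θ` of `F(a,b)` with `θ(a) = ab`, `θ(b) = ba` is
injective. -/
theorem stmt_15 : Function.Injective θ := by
  rw [θ_eq_lift]
  refine injective_lift_of_ping_pong _ (fun i => startsWith (i, true))
    (fun i => startsWith (!i, false)) (fun i => ⟨of i, by simp [startsWith, toWord_of]⟩)
    (fun i j hij => by simpa using hij) (fun i j hij => by simpa using hij)
    (fun i j => by simp) ?_ ?_
  · rintro i _ ⟨g, hg, rfl⟩
    exact startsWith_mk_pair_mul (by simp) hg
  · rintro i _ ⟨g, hg, rfl⟩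
    show mk [(!i, false), (i, false)] * g ∈ _
    exact startsWith_mk_pair_mul (by simp) hg
end

section
/- Let θ : F(a,b) → F(a,b) be the endomorphism of the free group on two generators determined by θ(a) = ab and θ(b) = ba, and let |·| denote the length of the reduced word representing an element of F(a,b). Then |θ(w)| = 2·|w| for every w ∈ F(a,b). -/
namespace FreeGroup

variable {α β : Type*}

theorem map_mk_eq_mk_flatMap (φ : FreeGroup α →* FreeGroup β) {f : α × Bool → List (β × Bool)}
    (hf : ∀ x, φ (mk [x]) = mk (f x)) (L : List (α × Bool)) : φ (mk L) = mk (L.flatMap f) := by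
  induction L with
  | nil => simp [← one_eq_mk]
  | cons x L ih =>
    rw [List.flatMap_cons, ← mul_mk, ← ih, ← hf, ← _root_.map_mul, mul_mk, List.singleton_append]

theorem IsReduced.flatMap {f : α × Bool → List (β × Bool)} (hne : ∀ x, f x ≠ [])
    (hf : ∀ x y, IsReduced [x, y] → IsReduced (f x ++ f y)) {L : List (α × Bool)}
    (hL : IsReduced L) : IsReduced (L.flatMap f) := by
  have hpair {x y : α × Bool} (hxy : x.1 = y.1 → x.2 = y.2) : IsReduced (f x ++ f y) :=
    hf x y (isReduced_cons_cons.2 ⟨hxy, .singleton⟩)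
  have hred (x : α × Bool) : IsReduced (f x) :=
    (hpair fun _ => rfl).infix (List.prefix_append _ _).isInfix
  rw [IsReduced, List.flatMap_def, List.isChain_flatten (by simpa using fun x _ => hne x)]
  exact ⟨List.forall_mem_map.2 fun x _ => hred x,
    List.isChain_map_of_isChain f (fun _ _ hxy => (List.isChain_append.1 (hpair hxy)).2.2) hL⟩

variable [DecidableEq α] [DecidableEq β]

theorem toWord_apply_eq_flatMap (φ : FreeGroup α →* FreeGroup β) {f : α × Bool → List (β × Bool)}
    (hφ : ∀ x, φ (mk [x]) = mk (f x)) (hne : ∀ x, f x ≠ [])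
    (hf : ∀ x y, IsReduced [x, y] → IsReduced (f x ++ f y)) (w : FreeGroup α) :
    (φ w).toWord = w.toWord.flatMap f := by
  rw [← mk_toWord (x := w), map_mk_eq_mk_flatMap φ hφ, toWord_mk, toWord_mk, reduce_toWord,
    (isReduced_toWord.flatMap hne hf).reduce_eq]

end FreeGroup

open FreeGroup

def θLetter : Bool × Bool → List (Bool × Bool)
  | (x, true) => [(x, true), (!x, true)]
  | (x, false) => [(!x, false), (x, false)]

theorem θ_mk_singleton (x : Bool × Bool) : θ (mk [x]) = mk (θLetter x) := by
  rcases x with ⟨_ | _, _ | _⟩ <;> simp [θ, θLetter, lift_mk] <;> rfl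

theorem isReduced_θLetter_append (x y : Bool × Bool) (hxy : IsReduced [x, y]) :
    IsReduced (θLetter x ++ θLetter y) := by
  revert x y
  unfold FreeGroup.IsReduced
  decide

theorem length_θLetter (x : Bool × Bool) : (θLetter x).length = 2 := by
  rcases x with ⟨_, _ | _⟩ <;> rfl

/-- For the endomorphism `θ` of `F(a,b)` with `θ(a) = ab`, `θ(b) = ba`, the
reduced word length of `θ(w)` is exactly twice that of `w`, for every `w ∈ F(a,b)`. -/
theorem stmt_16 (w : FreeGroup Bool) : FreeGroup.norm (θ w) = 2 * FreeGroup.norm w := by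
  have hne (x : Bool × Bool) : θLetter x ≠ [] := by
    simp [← List.length_pos_iff, length_θLetter]
  rw [FreeGroup.norm, FreeGroup.norm,
    toWord_apply_eq_flatMap θ θ_mk_singleton hne isReduced_θLetter_append]
  simp [length_θLetter, mul_comm]
end

section
/- Let θ : F(a,b) → F(a,b) be the endomorphism of the free group on two generators determined by θ(a) = ab and θ(b) = ba. Then θ has no periodic conjugacy class: there do not exist an element w ∈ F(a,b) with w ≠ 1 and positive integers i, j such that θⁱ(w) is conjugate in F(a,b) to wʲ. -/
/-!
Move the conjugacy to a cyclically reduced `u ≠ 1`, and replace `u` by `x = u ^ N`. Iterating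
`θⁱ(x) = g xʲ g⁻¹` gives `θᵏ(x) = g' x^J g'⁻¹` with `|g'| ≤ 2ᵏ |g|`. As `θ` substitutes a
reduced two-letter word for every letter, the reduced word of `θᵏ(x)` is `θᵏ` applied to that of
`x`, of length `2ᵏ |x|`, and all of it but at most `2 |g'|` letters is a factor of the
`|x|`-periodic word `x^J`. But words in the image of `θᵏ` have no long factors with a period `q`,
`2q ≤ 2ᵏ`: a factor of `θ(W)` with period `2q` contains `θ(W')` for a factor `W'` of `W` with
period `q`, and an odd period is incompatible with the pairing of consecutive letters in `θ(W)`.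
Hence `|x| < 2 |g| + 4`, which fails for `N = 2 |g| + 4`.
-/

theorem List.hasPeriod_flatten_replicate {α : Type*} (U : List α) (n : ℕ) :
    (List.replicate n U).flatten.HasPeriod U.length := by
  cases n with
  | zero => simp
  | succ n =>
    have hprefix : (List.replicate n U).flatten <+: (List.replicate (n + 1) U).flatten := by
      rw [List.replicate_succ', List.flatten_concat]
      exact List.prefix_append _ _
    rw [List.HasPeriod, List.replicate_succ, List.flatten_cons, List.take_left]
    exact (List.prefix_append_right_inj U).mpr hprefix

namespace FreeGroup

section Reduction

variable {α : Type*} [DecidableEq α]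

theorem IsReduced.exists_reduce_append_eq {L₁ L₂ : List (α × Bool)} (h₁ : IsReduced L₁)
    (h₂ : IsReduced L₂) :
    ∃ d, reduce (L₁ ++ L₂) = L₁.take (L₁.length - d) ++ L₂.drop d := by
  induction L₁ using List.reverseRecOn generalizing L₂ with
  | nil => exact ⟨0, by simp [h₂.reduce_eq]⟩
  | append_singleton X c ih =>
    rcases L₂ with _ | ⟨y, Y⟩
    · exact ⟨0, by simp [h₁.reduce_eq]⟩
    by_cases hcy : y = (c.1, !c.2)
    · obtain ⟨d, hd⟩ := ih (h₁.infix (List.prefix_append _ _).isInfix)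
        (h₂.infix (List.suffix_cons y Y).isInfix)
      refine ⟨d + 1, ?_⟩
      have hstep : Red.Step (X ++ [c] ++ y :: Y) (X ++ Y) := by
        subst hcy
        simpa using Red.Step.not (L₁ := X) (L₂ := Y) (x := c.1) (b := c.2)
      rw [reduce.Step.eq hstep, hd, List.length_append, List.length_singleton,
        Nat.add_sub_add_right, List.take_append_of_le_length (Nat.sub_le _ _)]
      rfl
    · have hcancel : c.1 = y.1 → c.2 = y.2 := by
        obtain ⟨c₁, c₂⟩ := c
        obtain ⟨y₁, y₂⟩ := y
        cases c₂ <;> cases y₂ <;> simp_all [eq_comm]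
      have hred : IsReduced (X ++ [c] ++ y :: Y) :=
        IsReduced.append_overlap h₁ (isReduced_cons_cons.mpr ⟨hcancel, h₂⟩) (List.cons_ne_nil _ _)
      exact ⟨0, by rw [Nat.sub_zero, List.take_length, List.drop_zero, hred.reduce_eq]⟩

theorem exists_toWord_mul_eq (x y : FreeGroup α) :
    ∃ d, (x * y).toWord = x.toWord.take (x.toWord.length - d) ++ y.toWord.drop d := by
  rw [toWord_mul]
  exact isReduced_toWord.exists_reduce_append_eq isReduced_toWord

theorem exists_infix_toWord_conj (g x : FreeGroup α) :
    ∃ M, M <:+: x.toWord ∧ M <:+: (g * x * g⁻¹).toWord ∧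
      norm (g * x * g⁻¹) ≤ M.length + 2 * norm g := by
  obtain ⟨d₁, h₁⟩ := exists_toWord_mul_eq x g⁻¹
  obtain ⟨d₂, h₂⟩ := exists_toWord_mul_eq g (x * g⁻¹)
  set X := x.toWord.take (x.toWord.length - d₁)
  have hword : (g * x * g⁻¹).toWord = g.toWord.take (g.toWord.length - d₂) ++ X.drop d₂ ++
      (g⁻¹.toWord.drop d₁).drop (d₂ - X.length) := by
    rw [mul_assoc, h₂, h₁, List.drop_append, List.append_assoc]
  refine ⟨X.drop d₂, (List.drop_suffix _ _).isInfix.trans (List.take_prefix _ _).isInfix,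
    hword ▸ List.infix_append _ _ _, ?_⟩
  have hinv : g⁻¹.toWord.length = g.toWord.length := by simp [toWord_inv]
  simp only [norm, hword, List.length_append, List.length_take, List.length_drop, hinv]
  omega

theorem exists_isCyclicallyReduced_isConj (w : FreeGroup α) :
    ∃ u : FreeGroup α, IsCyclicallyReduced u.toWord ∧ IsConj u w := by
  set R := reduceCyclically w.toWord
  have hR : IsCyclicallyReduced R := reduceCyclically.isCyclicallyReduced isReduced_toWord
  refine ⟨mk R, by rwa [toWord_mk, hR.isReduced.reduce_eq], isConj_iff.mpr ?_⟩
  refine ⟨mk (reduceCyclically.conjugator w.toWord), ?_⟩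
  rw [inv_mk, mul_mk, mul_mk, reduceCyclically.conj_conjugator_reduceCyclically, mk_toWord]

theorem IsCyclicallyReduced.toWord_pow {x : FreeGroup α} (hx : IsCyclicallyReduced x.toWord)
    (n : ℕ) : (x ^ n).toWord = (List.replicate n x.toWord).flatten := by
  rw [FreeGroup.toWord_pow, (hx.flatten_replicate n).isReduced.reduce_eq]

theorem IsCyclicallyReduced.norm_pow {x : FreeGroup α} (hx : IsCyclicallyReduced x.toWord)
    (n : ℕ) : norm (x ^ n) = n * norm x := by
  simp [norm, hx.toWord_pow]

end Reduction

def flipGen (x : Bool × Bool) : Bool × Bool := (!x.1, x.2)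

/-- `θ` replaces the letter `x` by the reduced word `[θLetter x, flipGen (θLetter x)]`;
for instance `a⁻¹ ↦ b⁻¹ a⁻¹`. -/
def θLetter (x : Bool × Bool) : Bool × Bool := if x.2 then x else flipGen x

def θWord (L : List (Bool × Bool)) : List (Bool × Bool) :=
  L.flatMap fun x => [θLetter x, flipGen (θLetter x)]

theorem flipGen_involutive : Function.Involutive flipGen := by rintro ⟨_ | _, _⟩ <;> rfl

theorem flipGen_ne (x : Bool × Bool) : flipGen x ≠ x := by revert x; decide

theorem θLetter_involutive : Function.Involutive θLetter := by
  rintro ⟨_ | _, _ | _⟩ <;> rfl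

@[simp] theorem θWord_nil : θWord [] = [] := rfl

@[simp] theorem θWord_cons (x : Bool × Bool) (L : List (Bool × Bool)) :
    θWord (x :: L) = θLetter x :: flipGen (θLetter x) :: θWord L := rfl

@[simp] theorem length_θWord (L : List (Bool × Bool)) : (θWord L).length = 2 * L.length := by
  induction L with
  | nil => rfl
  | cons x L ih => simp [ih]; ring

theorem θ_mk (L : List (Bool × Bool)) : θ (mk L) = mk (θWord L) := by
  induction L with
  | nil => exact _root_.map_one θ
  | cons x L ih =>
    have hletter : θ (mk [x]) = mk [θLetter x, flipGen (θLetter x)] := by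
      revert x; decide
    rw [← List.singleton_append, ← mul_mk, _root_.map_mul, hletter, ih, mul_mk]
    rfl

theorem isReduced_θWord {L : List (Bool × Bool)} (h : IsReduced L) : IsReduced (θWord L) := by
  induction L with
  | nil => exact IsReduced.nil
  | cons x L ih =>
    have hpair : ∀ x : Bool × Bool, (θLetter x).1 ≠ (flipGen (θLetter x)).1 := by decide
    rcases L with _ | ⟨y, L⟩
    · exact isReduced_cons_cons.mpr ⟨fun h' => (hpair x h').elim, IsReduced.singleton⟩
    · have hjoin : ∀ x y : Bool × Bool, (x.1 = y.1 → x.2 = y.2) →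
          (flipGen (θLetter x)).1 = (θLetter y).1 → (flipGen (θLetter x)).2 = (θLetter y).2 := by
        decide
      obtain ⟨hxy, hL⟩ := isReduced_cons_cons.mp h
      rw [θWord_cons, isReduced_cons_cons, θWord_cons, isReduced_cons_cons]
      exact ⟨fun h' => (hpair x h').elim, hjoin x y hxy, ih hL⟩

theorem toWord_θ (x : FreeGroup Bool) : (θ x).toWord = θWord x.toWord := by
  rw [← mk_toWord (x := x), θ_mk, toWord_mk, toWord_mk,
    (isReduced_θWord isReduced_toWord).reduce_eq, isReduced_toWord.reduce_eq]

theorem toWord_θ_iterate (k : ℕ) (x : FreeGroup Bool) :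
    ((⇑θ)^[k] x).toWord = θWord^[k] x.toWord := by
  induction k with
  | zero => rfl
  | succ k ih => rw [Function.iterate_succ_apply', Function.iterate_succ_apply', toWord_θ, ih]

theorem norm_θ_iterate (k : ℕ) (x : FreeGroup Bool) : norm ((⇑θ)^[k] x) = 2 ^ k * norm x := by
  induction k with
  | zero => simp
  | succ k ih =>
    rw [Function.iterate_succ_apply', norm, toWord_θ, length_θWord, ← norm, ih, pow_succ]
    ring

theorem getElem?_θWord_two_mul (L : List (Bool × Bool)) (s : ℕ) :
    (θWord L)[2 * s]? = L[s]?.map θLetter := by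
  induction L generalizing s with
  | nil => rfl
  | cons x L ih =>
    cases s with
    | zero => rfl
    | succ s => simpa [Nat.mul_succ] using ih s

theorem getElem?_θWord_two_mul_add_one (L : List (Bool × Bool)) (s : ℕ) :
    (θWord L)[2 * s + 1]? = ((θWord L)[2 * s]?).map flipGen := by
  induction L generalizing s with
  | nil => rfl
  | cons x L ih =>
    cases s with
    | zero => rfl
    | succ s => simpa [Nat.mul_succ] using ih s

theorem exists_prefix_θWord {W M : List (Bool × Bool)} (h : M <+: θWord W) :
    ∃ M', M' <+: W ∧ θWord M' <+: M ∧ M.length ≤ 2 * M'.length + 1 := by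
  induction W generalizing M with
  | nil => exact ⟨[], List.nil_prefix, List.nil_prefix, by simp [List.prefix_nil.mp h]⟩
  | cons w W ih =>
    rcases List.prefix_cons_iff.mp h with rfl | ⟨M₁, rfl, h₁⟩
    · exact ⟨[], List.nil_prefix, List.nil_prefix, by simp⟩
    rcases List.prefix_cons_iff.mp h₁ with rfl | ⟨M₂, rfl, h₂⟩
    · exact ⟨[], List.nil_prefix, List.nil_prefix, by simp⟩
    obtain ⟨M', hM'W, hM'M, hlen⟩ := ih h₂
    refine ⟨w :: M', List.cons_prefix_cons.mpr ⟨rfl, hM'W⟩, ?_, by simp; omega⟩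
    simpa using hM'M

theorem exists_infix_θWord {W M : List (Bool × Bool)} (h : M <:+: θWord W) :
    ∃ M', M' <:+: W ∧ θWord M' <:+: M ∧ M.length ≤ 2 * M'.length + 2 := by
  induction W generalizing M with
  | nil => exact ⟨[], List.nil_infix, List.nil_infix, by simp [List.infix_nil.mp h]⟩
  | cons w W ih =>
    rw [θWord_cons] at h
    rcases List.infix_cons_iff.mp h with h₀ | h₁
    · obtain ⟨M', hM'W, hM'M, hlen⟩ := exists_prefix_θWord (W := w :: W) h₀
      exact ⟨M', hM'W.isInfix, hM'M.isInfix, by omega⟩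
    rcases List.infix_cons_iff.mp h₁ with h₁ | h₂
    · rcases List.prefix_cons_iff.mp h₁ with rfl | ⟨M₁, rfl, hM₁⟩
      · exact ⟨[], List.nil_infix, List.nil_infix, by simp⟩
      obtain ⟨M', hM'W, hM'M, hlen⟩ := exists_prefix_θWord hM₁
      exact ⟨M', hM'W.isInfix.trans (List.suffix_cons w W).isInfix,
        hM'M.isInfix.trans (List.suffix_cons _ _).isInfix, by simp; omega⟩
    · obtain ⟨M', hM'W, hM'M, hlen⟩ := ih h₂
      exact ⟨M', hM'W.trans (List.suffix_cons w W).isInfix, hM'M, hlen⟩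

theorem _root_.List.HasPeriod.of_θWord {M : List (Bool × Bool)} {q : ℕ}
    (h : (θWord M).HasPeriod (2 * q)) : M.HasPeriod q := by
  rw [List.hasPeriod_iff_getElem?] at h ⊢
  intro s hs
  have := h (2 * s) (by simp; omega)
  rw [← mul_add, getElem?_θWord_two_mul, getElem?_θWord_two_mul] at this
  exact Option.map_injective θLetter_involutive.injective this

theorem not_hasPeriod_θWord_of_odd {M : List (Bool × Bool)} {q : ℕ} (hq : Odd q)
    (hlen : q < M.length) : ¬ (θWord M).HasPeriod q := by
  set X := θWord M
  intro hper
  rw [List.hasPeriod_iff_getElem?] at hper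
  have hX : X.length = 2 * M.length := length_θWord M
  -- an odd shift carries the relation inside each pair to the junctions between pairs
  have hflip : ∀ r, r + q + 1 < X.length → X[r + 1]? = X[r]?.map flipGen := by
    intro r hr
    rcases Nat.even_or_odd' r with ⟨s, rfl | rfl⟩
    · exact getElem?_θWord_two_mul_add_one M s
    · obtain ⟨c, rfl⟩ := hq
      have : X[2 * (s + c + 1) + 1]? = X[2 * (s + c + 1)]?.map flipGen :=
        getElem?_θWord_two_mul_add_one M _
      rwa [show 2 * (s + c + 1) + 1 = 2 * s + 1 + 1 + (2 * c + 1) by ring,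
        show 2 * (s + c + 1) = 2 * s + 1 + (2 * c + 1) by ring,
        ← hper _ (by omega), ← hper _ (by omega)] at this
  have hiter : ∀ t ≤ q, X[t]? = X[0]?.map flipGen^[t] := by
    intro t ht
    induction t with
    | zero => simp
    | succ t ih =>
      rw [hflip t (by omega), ih (by omega), Option.map_map, ← Function.iterate_succ']
  obtain ⟨y, hy⟩ : ∃ y, X[0]? = some y := ⟨_, List.getElem?_eq_getElem (by omega)⟩
  have := hiter q le_rfl
  rw [← zero_add q, ← hper 0 (by omega), zero_add, hy, flipGen_involutive.iterate_odd hq] at this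
  exact flipGen_ne y (Option.some_injective _ this).symm

theorem length_lt_of_hasPeriod_of_infix_θWord_iterate (W : List (Bool × Bool)) {k q : ℕ}
    {M : List (Bool × Bool)} (hq : 0 < q) (hqk : 2 * q ≤ 2 ^ k) (hM : M <:+: θWord^[k] W)
    (hper : M.HasPeriod q) : M.length + 2 < 2 * q + 3 * 2 ^ k := by
  induction k generalizing M q with
  | zero => simp at hqk; omega
  | succ k ih =>
    rw [Function.iterate_succ_apply'] at hM
    obtain ⟨M', hM'W, hM'M, hlen⟩ := exists_infix_θWord hM
    have hper' := hper.infix hM'M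
    rw [pow_succ] at hqk ⊢
    rcases Nat.even_or_odd' q with ⟨q', rfl | rfl⟩
    · have := ih (by omega) (by omega) hM'W hper'.of_θWord
      omega
    · by_contra! hge
      exact not_hasPeriod_θWord_of_odd ⟨q', rfl⟩ (by omega) hper'

theorem two_pow_mul_norm_lt_of_θ_iterate_eq_conj {x g : FreeGroup Bool} {k J : ℕ}
    (hx : IsCyclicallyReduced x.toWord) (hx₁ : x ≠ 1) (hk : 2 * norm x ≤ 2 ^ k)
    (h : (⇑θ)^[k] x = g * x ^ J * g⁻¹) : 2 ^ k * norm x < 2 * norm g + 4 * 2 ^ k := by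
  obtain ⟨M, hMx, hMθ, hlen⟩ := exists_infix_toWord_conj g (x ^ J)
  rw [← h, toWord_θ_iterate] at hMθ
  rw [← h, norm_θ_iterate] at hlen
  rw [hx.toWord_pow] at hMx
  have hpos : 0 < norm x := Nat.pos_of_ne_zero (by simpa using hx₁)
  have := length_lt_of_hasPeriod_of_infix_θWord_iterate x.toWord hpos hk hMθ
    ((List.hasPeriod_flatten_replicate _ _).infix hMx)
  omega

theorem exists_θ_iterate_eq_conj_pow {x g : FreeGroup Bool} {i j : ℕ} (hi : 0 < i)
    (h : (⇑θ)^[i] x = g * x ^ j * g⁻¹) (m : ℕ) :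
    ∃ g' : FreeGroup Bool, (⇑θ)^[m * i] x = g' * x ^ j ^ m * g'⁻¹ ∧
      norm g' ≤ 2 ^ (m * i) * norm g := by
  induction m with
  | zero => exact ⟨1, by simp, by simp⟩
  | succ m ih =>
    obtain ⟨g', hg', hnorm⟩ := ih
    refine ⟨(⇑θ)^[m * i] g * g', ?_, ?_⟩
    · rw [add_one_mul, Function.iterate_add_apply, h, iterate_map_mul, iterate_map_mul,
        iterate_map_inv, iterate_map_pow, hg', conj_pow, pow_succ, pow_mul]
      group
    · have hdouble : 2 ^ (m * i) * 2 ≤ 2 ^ ((m + 1) * i) := by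
        rw [add_one_mul, pow_add]
        exact Nat.mul_le_mul_left _ (Nat.le_self_pow hi.ne' 2)
      calc norm ((⇑θ)^[m * i] g * g')
          ≤ norm ((⇑θ)^[m * i] g) + norm g' := norm_mul_le _ _
        _ ≤ 2 ^ (m * i) * 2 * norm g := by rw [norm_θ_iterate]; linarith
        _ ≤ 2 ^ ((m + 1) * i) * norm g := Nat.mul_le_mul_right _ hdouble

theorem norm_lt_of_θ_iterate_eq_conj {x g : FreeGroup Bool} {i j : ℕ}
    (hx : IsCyclicallyReduced x.toWord) (hx₁ : x ≠ 1) (hi : 0 < i)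
    (h : (⇑θ)^[i] x = g * x ^ j * g⁻¹) : norm x < 2 * norm g + 4 := by
  set m := norm x + 1
  obtain ⟨g', hg', hg'norm⟩ := exists_θ_iterate_eq_conj_pow hi h m
  have hk : 2 * norm x ≤ 2 ^ (m * i) :=
    calc 2 * norm x ≤ 2 ^ m := by
          have := Nat.lt_two_pow_self (n := norm x)
          rw [pow_succ]; omega
      _ ≤ 2 ^ (m * i) := Nat.pow_le_pow_right two_pos (Nat.le_mul_of_pos_right m hi)
  have hlt := two_pow_mul_norm_lt_of_θ_iterate_eq_conj hx hx₁ hk hg'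
  refine Nat.lt_of_mul_lt_mul_left (a := 2 ^ (m * i)) ?_
  calc 2 ^ (m * i) * norm x < 2 * norm g' + 4 * 2 ^ (m * i) := hlt
    _ ≤ 2 ^ (m * i) * (2 * norm g + 4) := by nlinarith

end FreeGroup

/-- The endomorphism `θ` of `F(a,b)` with `θ(a) = ab`, `θ(b) = ba` has no
periodic conjugacy class: there are no `w ≠ 1` and positive integers `i, j` with `θⁱ(w)`
conjugate to `wʲ`. -/
theorem stmt_18 :
    ¬ ∃ (w : FreeGroup Bool) (i j : ℕ),
        w ≠ 1 ∧ 0 < i ∧ 0 < j ∧ IsConj ((⇑θ)^[i] w) (w ^ j) := by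
  rintro ⟨w, i, j, hw, hi, -, hconj⟩
  obtain ⟨u, hu, huw⟩ := FreeGroup.exists_isCyclicallyReduced_isConj w
  have hu₁ : u ≠ 1 := by rintro rfl; exact hw (isConj_one_right.mp huw)
  obtain ⟨g, hg⟩ : ∃ g, g * u ^ j * g⁻¹ = (⇑θ)^[i] u := isConj_iff.mp
    ((MonoidHom.map_isConj ((show Monoid.End (FreeGroup Bool) from θ) ^ i) huw).trans hconj
      |>.trans (huw.pow j).symm).symm
  set N := 2 * g.norm + 4
  have hθ : (⇑θ)^[i] (u ^ N) = g * (u ^ N) ^ j * g⁻¹ := by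
    rw [iterate_map_pow, ← hg, conj_pow, ← pow_mul, ← pow_mul, mul_comm]
  have hlt := FreeGroup.norm_lt_of_θ_iterate_eq_conj (hu.toWord_pow N ▸ hu.flatten_replicate N)
    ((pow_eq_one_iff_left (by omega)).not.mpr hu₁) hi hθ
  rw [hu.norm_pow] at hlt
  exact hlt.not_ge (Nat.le_mul_of_pos_right N (Nat.pos_of_ne_zero (by simpa using hu₁)))
end
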